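/- arXiv:2501.03369 — 5 statements merged into one kernel-verified Lean document; each statement's English description precedes it below -/
import Mathlib

section
/- Let D be a finite connected graph with a group G acting by graph automorphisms. If there exists a rigidity of D fixed by the G-action on the set of rigidities, then the number of rigidities of D is at most β(D) + 1, where β(D) is the Betti number of D. -/
/-- A *rigidity* of a graph `D` with respect to a group `G` acting on the vertices. -/
def IsRigidity {V : Type*} (G : Type*) [Group G] [MulAction G V]
    (D : SimpleGraph V) (R : Set V) : Prop :=
  ∃ H : Subgroup G,
    (∃ c : (D.induce (MulAction.fixedPoints H V)).ConnectedComponent,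
        R = Subtype.val '' c.supp) ∧
    ∀ v ∈ R, MulAction.stabilizer G v = H

/-!
Root a spanning tree of `D` at a vertex `x₀` of the invariant rigidity `R₀`: inside `R₀` it
follows a spanning tree of `R₀` (connected in the fixed subgraph), outside `R₀` every vertex is
joined to a neighbour closer to `R₀`. Every other rigidity `R` contributes one more edge. At a
vertex `x ∈ R` closest to `R₀`, the parent `p` of `x` is closer to `R₀`, so it lies outside `R`
and hence is moved by some `h` in the stabilizer of `x`. Since `R₀` is invariant, so is the
distance to `R₀`, and the edge `x — h • p` again goes down towards `R₀` without being a tree edge.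
Orienting all chosen edges downwards shows that they are distinct, so
`(|V| - 1) + (#rigidities - 1) ≤ |E|`.
-/

lemma Sym2.eq_and_eq_of_mk_eq_of_lt {α β : Type*} [Preorder β] {r : α → β} {a b c d : α}
    (h : s(a, b) = s(c, d)) (hab : r b < r a) (hcd : r d < r c) : a = c ∧ b = d := by
  rcases Sym2.eq_iff.mp h with h | ⟨rfl, rfl⟩
  · exact h
  · exact (lt_asymm hab hcd).elim

namespace SimpleGraph

variable {V : Type*} {D : SimpleGraph V}

lemma Hom.edist_le {W : Type*} {D' : SimpleGraph W} (f : D →g D') (u v : V) :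
    D'.edist (f u) (f v) ≤ D.edist u v := by
  by_cases hr : D.Reachable u v
  · obtain ⟨p, hp⟩ := hr.exists_walk_length_eq_edist
    simpa [hp] using SimpleGraph.edist_le (p.map f)
  · rw [edist_eq_top_of_not_reachable hr]
    exact le_top

lemma Iso.edist_eq {W : Type*} {D' : SimpleGraph W} (φ : D ≃g D') (u v : V) :
    D'.edist (φ u) (φ v) = D.edist u v :=
  le_antisymm (φ.toHom.edist_le u v) (by simpa using φ.symm.toHom.edist_le (φ u) (φ v))

lemma Iso.dist_eq {W : Type*} {D' : SimpleGraph W} (φ : D ≃g D') (u v : V) :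
    D'.dist (φ u) (φ v) = D.dist u v :=
  congrArg ENat.toNat (φ.edist_eq u v)

lemma Reachable.exists_adj_dist_lt {v w : V} (hr : D.Reachable v w) (hne : v ≠ w) :
    ∃ u, D.Adj v u ∧ D.dist u w < D.dist v w := by
  obtain ⟨p, hp⟩ := hr.exists_walk_length_eq_dist
  cases p with
  | nil => exact absurd rfl hne
  | cons h q =>
    refine ⟨_, h, ?_⟩
    have := dist_le q
    rw [← hp, Walk.length_cons]
    omega

noncomputable def distToSet (D : SimpleGraph V) (S : Set V) (v : V) : ℕ :=
  sInf (D.dist v '' S)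

variable {S : Set V} {u v : V}

lemma distToSet_le_dist (hu : u ∈ S) : D.distToSet S v ≤ D.dist v u :=
  Nat.sInf_le ⟨u, hu, rfl⟩

lemma distToSet_of_mem (hv : v ∈ S) : D.distToSet S v = 0 :=
  Nat.le_zero.mp (dist_self (G := D) ▸ distToSet_le_dist hv)

lemma exists_dist_eq_distToSet (hS : S.Nonempty) (v : V) :
    ∃ u ∈ S, D.dist v u = D.distToSet S v :=
  Nat.sInf_mem (hS.image _)

lemma Connected.exists_adj_distToSet_lt (hconn : D.Connected) (hS : S.Nonempty) (hv : v ∉ S) :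
    ∃ u, D.Adj v u ∧ D.distToSet S u < D.distToSet S v := by
  obtain ⟨u₀, hu₀, hd⟩ := exists_dist_eq_distToSet hS v
  obtain ⟨u, hadj, hlt⟩ := (hconn v u₀).exists_adj_dist_lt (ne_of_mem_of_not_mem hu₀ hv).symm
  exact ⟨u, hadj, (distToSet_le_dist hu₀).trans_lt (hd ▸ hlt)⟩

lemma Iso.distToSet_eq (φ : D ≃g D) (hS : φ '' S = S) (v : V) :
    D.distToSet S (φ v) = D.distToSet S v := by
  conv_lhs => rw [distToSet, ← hS, Set.image_image]
  simp only [φ.dist_eq]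
  rfl

lemma Connected.exists_spanning_descent (hconn : D.Connected) {x₀ : V} (hx₀ : x₀ ∈ S)
    {m : V → ℕ} {q : V → V} (hq : ∀ v ∈ S, v ≠ x₀ → D.Adj v (q v) ∧ q v ∈ S ∧ m (q v) < m v) :
    ∃ parent : V → V,
      (∀ v ≠ x₀, D.Adj v (parent v) ∧
        toLex (D.distToSet S (parent v), m (parent v)) < toLex (D.distToSet S v, m v)) ∧
      ∀ v ∉ S, D.distToSet S (parent v) < D.distToSet S v := by
  classical
  choose! par hpar using fun v (hv : v ∉ S) => hconn.exists_adj_distToSet_lt ⟨x₀, hx₀⟩ hv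
  refine ⟨fun v => if v ∈ S then q v else par v, fun v hv => ?_, fun v hv => ?_⟩
  · by_cases hvS : v ∈ S
    · obtain ⟨hadj, hqS, hlt⟩ := hq v hvS hv
      simp only [if_pos hvS]
      refine ⟨hadj, Prod.Lex.toLex_lt_toLex.mpr (Or.inr ⟨?_, hlt⟩)⟩
      rw [distToSet_of_mem hqS, distToSet_of_mem hvS]
    · simp only [if_neg hvS]
      exact ⟨(hpar v hvS).1, Prod.Lex.toLex_lt_toLex.mpr (Or.inl (hpar v hvS).2)⟩
  · simpa only [if_neg hv] using (hpar v hv).2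

theorem card_add_ncard_le_ncard_edgeSet_add_one [Finite V] {β : Type*} [Preorder β]
    {rank : V → β} {parent : V → V} {x₀ : V}
    (hparent : ∀ v ≠ x₀, D.Adj v (parent v) ∧ rank (parent v) < rank v)
    {ι : Type*} {s : Set ι} {x w : ι → V} (hx : s.InjOn x)
    (hadj : ∀ i ∈ s, D.Adj (x i) (w i)) (hlt : ∀ i ∈ s, rank (w i) < rank (x i))
    (hne : ∀ i ∈ s, w i ≠ parent (x i)) :
    Nat.card V + s.ncard ≤ D.edgeSet.ncard + 1 := by
  let e : ({x₀}ᶜ : Set V) ⊕ s → D.edgeSet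
    | .inl v => ⟨s(v, parent v), (hparent v v.2).1⟩
    | .inr i => ⟨s(x i, w i), hadj i i.2⟩
  have he : Function.Injective e := by
    rintro (v | i) (v' | i') h <;> replace h := congrArg Subtype.val h <;>
      simp only [e, Sum.inl.injEq, Sum.inr.injEq, reduceCtorEq] at h ⊢
    · exact Subtype.ext (Sym2.eq_and_eq_of_mk_eq_of_lt h (hparent v v.2).2 (hparent v' v'.2).2).1
    · obtain ⟨hv, hw⟩ := Sym2.eq_and_eq_of_mk_eq_of_lt h (hparent v v.2).2 (hlt i' i'.2)
      exact hne i' i'.2 (hv ▸ hw.symm)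
    · obtain ⟨hv, hw⟩ := Sym2.eq_and_eq_of_mk_eq_of_lt h (hlt i i.2) (hparent v' v'.2).2
      exact hne i i.2 (hv ▸ hw)
    · exact Subtype.ext (hx i.2 i'.2 (Sym2.eq_and_eq_of_mk_eq_of_lt h (hlt i i.2) (hlt i' i'.2)).1)
  have : Finite s := ((Set.toFinite _).of_finite_image hx).to_subtype
  have hcard := Nat.card_le_card_of_injective e he
  rw [Nat.card_sum, Nat.card_coe_set_eq, Nat.card_coe_set_eq, Nat.card_coe_set_eq] at hcard
  have hV := Set.ncard_add_ncard_compl {x₀}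
  rw [Set.ncard_singleton] at hV
  omega

end SimpleGraph

namespace IsRigidity

open SimpleGraph MulAction

variable {V G : Type*} [Group G] [MulAction G V] {D : SimpleGraph V} {R R' : Set V}

lemma nonempty (hR : IsRigidity G D R) : R.Nonempty := by
  obtain ⟨H, ⟨c, rfl⟩, -⟩ := hR
  obtain ⟨a, rfl⟩ := c.exists_rep
  exact ⟨a, a, rfl, rfl⟩

lemma eq_of_mem (hR : IsRigidity G D R) (hR' : IsRigidity G D R') {v : V} (hv : v ∈ R)
    (hv' : v ∈ R') : R = R' := by
  obtain ⟨H, ⟨c, rfl⟩, hH⟩ := hR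
  obtain ⟨H', ⟨c', rfl⟩, hH'⟩ := hR'
  obtain rfl : H' = H := (hH' v hv').symm.trans (hH v hv)
  obtain ⟨a, ha, rfl⟩ := hv
  obtain ⟨a', ha', haa'⟩ := hv'
  obtain rfl : a' = a := Subtype.ext haa'
  rw [ConnectedComponent.mem_supp_iff] at ha ha'
  rw [← ha, ha']

lemma mem_of_adj (hR : IsRigidity G D R) {x y : V} (hx : x ∈ R)
    (hstab : stabilizer G x ≤ stabilizer G y) (hadj : D.Adj x y) : y ∈ R := by
  obtain ⟨H, ⟨c, rfl⟩, hH⟩ := hR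
  have hy : y ∈ fixedPoints H V := fun h => hstab (hH x hx ▸ h.2)
  obtain ⟨a, ha, rfl⟩ := hx
  refine ⟨⟨y, hy⟩, ?_, rfl⟩
  rw [ConnectedComponent.mem_supp_iff] at ha ⊢
  rw [← ha]
  exact ConnectedComponent.sound (show (D.induce _).Adj ⟨y, hy⟩ a from hadj.symm).reachable

lemma exists_descent (hR : IsRigidity G D R) {x₀ : V} (hx₀ : x₀ ∈ R) :
    ∃ (m : V → ℕ) (q : V → V), ∀ v ∈ R, v ≠ x₀ → D.Adj v (q v) ∧ q v ∈ R ∧ m (q v) < m v := by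
  classical
  obtain ⟨H, ⟨c, rfl⟩, -⟩ := hR
  obtain ⟨a₀, ha₀, rfl⟩ := hx₀
  let m : V → ℕ := fun v =>
    if h : v ∈ fixedPoints H V then (D.induce (fixedPoints H V)).dist ⟨v, h⟩ a₀ else 0
  have hstep : ∀ v ∈ Subtype.val '' c.supp, v ≠ a₀ →
      ∃ u, D.Adj v u ∧ u ∈ Subtype.val '' c.supp ∧ m u < m v := by
    rintro _ ⟨a, ha, rfl⟩ hne
    obtain ⟨u, hadj, hlt⟩ := (ConnectedComponent.exact (ha.trans ha₀.symm)).exists_adj_dist_lt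
      (fun h => hne (congrArg Subtype.val h))
    refine ⟨u, hadj, ⟨u, (ConnectedComponent.sound hadj.reachable).symm.trans ha, rfl⟩, ?_⟩
    simpa only [m, dif_pos u.2, dif_pos a.2] using hlt
  choose! q hq using hstep
  exact ⟨m, q, hq⟩

lemma exists_adj_lt_ne [Finite V] (hact : ∀ (g : G) (v w : V), D.Adj (g • v) (g • w) ↔ D.Adj v w)
    (hR : IsRigidity G D R) {β : Type*} [LinearOrder β] {f : V → β}
    (hf : ∀ (g : G) (v : V), f (g • v) = f v) {par : V → V}
    (hpar : ∀ v ∈ R, D.Adj v (par v) ∧ f (par v) < f v) :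
    ∃ x ∈ R, ∃ w, D.Adj x w ∧ f w < f x ∧ w ≠ par x := by
  obtain ⟨x, hxR, hmin⟩ := R.exists_min_image f R.toFinite hR.nonempty
  obtain ⟨hadj, hlt⟩ := hpar x hxR
  have hout : par x ∉ R := fun h => (hmin _ h).not_gt hlt
  obtain ⟨g, hgx, hg⟩ := SetLike.not_le_iff_exists.mp (mt (hR.mem_of_adj hxR · hadj) hout)
  refine ⟨x, hxR, g • par x, ?_, by rwa [hf], hg⟩
  simpa [mem_stabilizer_iff.mp hgx] using (hact g x (par x)).mpr hadj

end IsRigidity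

/-- if some rigidity of the finite connected `G`-graph `D` is fixed by the
(image) action of `G` on the set of rigidities, then the number of rigidities of `D`
is at most `β(D) + 1`, where `β(D) = 1 - |V| + |E|` is the Betti number. -/
theorem stmt1 {V G : Type*} [Finite V] [Group G] [MulAction G V]
    (D : SimpleGraph V)
    (hact : ∀ (g : G) (v w : V), D.Adj (g • v) (g • w) ↔ D.Adj v w)
    (hconn : D.Connected)
    (hfix : ∃ R : Set V, IsRigidity G D R ∧ ∀ g : G, (fun v => g • v) '' R = R) :
    ({R : Set V | IsRigidity G D R}.ncard : ℤ) ≤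
      (1 - (Nat.card V : ℤ) + (D.edgeSet.ncard : ℤ)) + 1 := by
  obtain ⟨R₀, hR₀, hinv⟩ := hfix
  obtain ⟨x₀, hx₀⟩ := hR₀.nonempty
  obtain ⟨m, q, hq⟩ := hR₀.exists_descent hx₀
  obtain ⟨parent, hparent, hdescent⟩ := hconn.exists_spanning_descent hx₀ hq
  have hinvariant : ∀ (g : G) (v : V), D.distToSet R₀ (g • v) = D.distToSet R₀ v := fun g =>
    SimpleGraph.Iso.distToSet_eq ⟨MulAction.toPerm g, hact g _ _⟩ (hinv g)
  have hextra : ∀ R ∈ {R | IsRigidity G D R} \ {R₀}, ∃ x ∈ R, ∃ w, D.Adj x w ∧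
      D.distToSet R₀ w < D.distToSet R₀ x ∧ w ≠ parent x := by
    rintro R ⟨hR, hne⟩
    have hout : ∀ v ∈ R, v ∉ R₀ := fun v hv hv₀ => hne (hR.eq_of_mem hR₀ hv hv₀)
    refine hR.exists_adj_lt_ne hact hinvariant fun v hv => ⟨?_, hdescent v (hout v hv)⟩
    exact (hparent v (ne_of_mem_of_not_mem hx₀ (hout v hv)).symm).1
  have : Nonempty V := ⟨x₀⟩
  choose! x hx w hw using hextra
  have hcount := D.card_add_ncard_le_ncard_edgeSet_add_one
    (rank := fun v => toLex (D.distToSet R₀ v, m v)) hparent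
    (fun R hR R' hR' h => hR.1.eq_of_mem hR'.1 (hx R hR) (h ▸ hx R' hR'))
    (fun R hR => (hw R hR).1) (fun R hR => Prod.Lex.toLex_lt_toLex.mpr (Or.inl (hw R hR).2.1))
    (fun R hR => (hw R hR).2.2)
  have hrig := Set.ncard_sdiff_singleton_add_one (s := {R | IsRigidity G D R}) hR₀
  omega
end

section
/- Let D be a finite connected graph with a group G acting by graph automorphisms, and let v be a vertex of D. Then the number of rigidities of D whose vertex set is disjoint from the G-orbit of v is at most β(D) + |G·v| - 1. -/
open MulAction Function

namespace SimpleGraph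

variable {V : Type*} {D : SimpleGraph V}

/-- The length of a shortest walk from `x` into `O`, or `0` if there is none. -/
noncomputable def infDist (D : SimpleGraph V) (x : V) (O : Set V) : ℕ :=
  sInf {n | ∃ o ∈ O, ∃ p : D.Walk x o, p.length = n}

section infDist

variable {O : Set V} {x : V}

lemma infDist_le {o : V} (ho : o ∈ O) (p : D.Walk x o) : D.infDist x O ≤ p.length :=
  Nat.sInf_le ⟨o, ho, p, rfl⟩

lemma Connected.exists_walk_length_eq_infDist (hconn : D.Connected) (hO : O.Nonempty)
    (x : V) : ∃ o ∈ O, ∃ p : D.Walk x o, p.length = D.infDist x O := by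
  obtain ⟨o, ho⟩ := hO
  exact Nat.sInf_mem (s := {n | ∃ o ∈ O, ∃ p : D.Walk x o, p.length = n})
    ⟨_, o, ho, (hconn x o).some, rfl⟩

lemma Connected.exists_adj_infDist_lt (hconn : D.Connected) (hO : O.Nonempty) (hx : x ∉ O) :
    ∃ y, D.Adj x y ∧ D.infDist y O < D.infDist x O := by
  obtain ⟨o, ho, p, hp⟩ := hconn.exists_walk_length_eq_infDist hO x
  cases p with
  | nil => exact absurd ho hx
  | cons hadj p =>
    rw [Walk.length_cons] at hp
    exact ⟨_, hadj, (infDist_le ho p).trans_lt (by omega)⟩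

lemma Connected.infDist_map_le (hconn : D.Connected) (hO : O.Nonempty) (φ : D →g D)
    (hφ : ∀ o ∈ O, φ o ∈ O) (x : V) : D.infDist (φ x) O ≤ D.infDist x O := by
  obtain ⟨o, ho, p, hp⟩ := hconn.exists_walk_length_eq_infDist hO x
  calc D.infDist (φ x) O ≤ (p.map φ).length := infDist_le (hφ o ho) _
    _ = D.infDist x O := by rw [Walk.length_map, hp]

end infDist

lemma card_le_ncard_edgeSet_of_descending [Finite V] {ι : Type*} (key : V → ℕ)
    {f : ι → D.Dart} (hf : Injective f) (hkey : ∀ i, key (f i).snd < key (f i).fst) :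
    Nat.card ι ≤ D.edgeSet.ncard := by
  have hedge : Injective fun i => (⟨(f i).edge, (f i).edge_mem⟩ : D.edgeSet) := by
    intro i j hij
    rcases (dart_edge_eq_iff _ _).1 (congrArg Subtype.val hij) with h | h
    · exact hf h
    · exact ((hkey i).asymm (by rw [h]; exact hkey j)).elim
  rw [← Nat.card_coe_set_eq]
  exact Nat.card_le_card_of_injective _ hedge

lemma ncard_compl_add_card_le_ncard_edgeSet [Finite V] {ι : Type*} (key : V → ℕ)
    {O : Set V} {p : V → V} (hp : ∀ x ∉ O, D.Adj x (p x) ∧ key (p x) < key x)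
    {b q : ι → V} (hb : Injective b)
    (hq : ∀ i, D.Adj (b i) (q i) ∧ key (q i) < key (b i)) (hqp : ∀ i, q i ≠ p (b i)) :
    Oᶜ.ncard + Nat.card ι ≤ D.edgeSet.ncard := by
  have : Finite ι := Finite.of_injective b hb
  let f : ↥Oᶜ ⊕ ι → D.Dart :=
    Sum.elim (fun x => ⟨(x, p x), (hp x x.2).1⟩) (fun i => ⟨(b i, q i), (hq i).1⟩)
  have hf : Injective f := by
    refine Injective.sumElim (fun x y h => Subtype.ext (congrArg (·.fst) h))
      (fun i j h => hb (congrArg (·.fst) h)) (fun x i h => hqp i ?_)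
    have hx : (x : V) = b i := congrArg (·.fst) h
    have hpx : p x = q i := congrArg (·.snd) h
    rw [← hpx, hx]
  rw [← Nat.card_coe_set_eq, ← Nat.card_sum]
  refine card_le_ncard_edgeSet_of_descending key hf ?_
  rintro (x | i)
  exacts [(hp x x.2).2, (hq i).2]

end SimpleGraph

open SimpleGraph

section Rigidity

variable {V G : Type*} [Group G] [MulAction G V] {D : SimpleGraph V} {R R' : Set V}

lemma SimpleGraph.Connected.infDist_smul (hconn : D.Connected)
    (hact : ∀ (g : G) (v w : V), D.Adj (g • v) (g • w) ↔ D.Adj v w)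
    {O : Set V} (hO : O.Nonempty) (hOinv : ∀ (g : G), ∀ o ∈ O, g • o ∈ O) (g : G) (x : V) :
    D.infDist (g • x) O = D.infDist x O := by
  have hle : ∀ (g : G) x, D.infDist (g • x) O ≤ D.infDist x O := fun g =>
    hconn.infDist_map_le hO ⟨(g • ·), (hact g _ _).2⟩ (hOinv g)
  refine (hle g x).antisymm ?_
  simpa using hle g⁻¹ (g • x)

lemma IsRigidity.nonempty_s2 (hR : IsRigidity G D R) : R.Nonempty := by
  obtain ⟨H, ⟨c, rfl⟩, -⟩ := hR
  exact c.nonempty_supp.image _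

lemma IsRigidity.eq_of_mem_s2 (hR : IsRigidity G D R) (hR' : IsRigidity G D R') {x : V}
    (hx : x ∈ R) (hx' : x ∈ R') : R = R' := by
  obtain ⟨H, ⟨c, rfl⟩, hH⟩ := hR
  obtain ⟨H', ⟨c', rfl⟩, hH'⟩ := hR'
  obtain rfl : H = H' := (hH x hx).symm.trans (hH' x hx')
  obtain ⟨x, hxc, rfl⟩ := hx
  obtain ⟨x', hxc', hxx'⟩ := hx'
  obtain rfl : x' = x := Subtype.ext hxx'
  rw [ConnectedComponent.mem_supp_iff] at hxc hxc'
  rw [← hxc, ← hxc']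

lemma IsRigidity.exists_smul_ne (hR : IsRigidity G D R) {b y : V} (hb : b ∈ R) (hy : y ∉ R)
    (hadj : D.Adj b y) : ∃ g ∈ stabilizer G b, g • y ≠ y := by
  obtain ⟨H, ⟨c, rfl⟩, hH⟩ := hR
  by_contra! hfix
  rw [hH b hb] at hfix
  obtain ⟨⟨b, hbH⟩, hbc, rfl⟩ := hb
  refine hy ⟨⟨y, fun g => hfix g g.2⟩, ?_, rfl⟩
  rw [ConnectedComponent.mem_supp_iff] at hbc ⊢
  rw [← hbc]
  exact ConnectedComponent.sound (Adj.reachable (G := D.induce _) hadj.symm)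

lemma IsRigidity.exists_second_descent
    (hact : ∀ (g : G) (v w : V), D.Adj (g • v) (g • w) ↔ D.Adj v w)
    {key : V → ℕ} (hkey : ∀ (g : G) x, key (g • x) = key x) (hR : IsRigidity G D R)
    {p : V → V} (hp : ∀ x ∈ R, D.Adj x (p x) ∧ key (p x) < key x) :
    ∃ b ∈ R, ∃ q, (D.Adj b q ∧ key q < key b) ∧ q ≠ p b := by
  obtain ⟨b, hbR, hbmin⟩ := exists_minimalFor_of_wellFoundedLT (· ∈ R) key hR.nonempty_s2
  obtain ⟨hadj, hlt⟩ := hp b hbR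
  have hpR : p b ∉ R := fun h => hlt.not_ge (hbmin h hlt.le)
  obtain ⟨g, hg, hgp⟩ := hR.exists_smul_ne hbR hpR hadj
  refine ⟨b, hbR, g • p b, ⟨?_, by rwa [hkey]⟩, hgp⟩
  simpa [mem_stabilizer_iff.1 hg] using (hact g b (p b)).2 hadj

end Rigidity

/-- for any vertex `v` of the finite connected `G`-graph `D`, the number
of rigidities of `D` whose vertex set is disjoint from the orbit `G·v` is at most
`β(D) + |G·v| - 1`, where `β(D) = 1 - |V| + |E|`. -/
theorem stmt2 {V G : Type*} [Finite V] [Group G] [MulAction G V]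
    (D : SimpleGraph V)
    (hact : ∀ (g : G) (v w : V), D.Adj (g • v) (g • w) ↔ D.Adj v w)
    (hconn : D.Connected) (v : V) :
    ({R : Set V | IsRigidity G D R ∧ R ∩ MulAction.orbit G v = ∅}.ncard : ℤ) ≤
      (1 - (Nat.card V : ℤ) + (D.edgeSet.ncard : ℤ)) + (MulAction.orbit G v).ncard - 1 := by
  set O := orbit G v
  have hO : O.Nonempty := ⟨v, mem_orbit_self v⟩
  have hkey := hconn.infDist_smul hact hO fun g _ => mem_orbit_of_mem_orbit g
  choose! p hp using fun x (hx : x ∉ O) => hconn.exists_adj_infDist_lt hO hx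
  set 𝒮 := {R : Set V | IsRigidity G D R ∧ R ∩ O = ∅}
  have hRO : ∀ R ∈ 𝒮, ∀ x ∈ R, x ∉ O := fun R hR x hx hxO =>
    (Set.eq_empty_iff_forall_notMem.1 hR.2 x) ⟨hx, hxO⟩
  choose b hbR q hq hqp using fun R : 𝒮 =>
    R.2.1.exists_second_descent hact (key := (D.infDist · O)) hkey
      fun x hx => hp x (hRO R R.2 x hx)
  have hb : Injective b := fun R R' h =>
    Subtype.ext (R.2.1.eq_of_mem_s2 R'.2.1 (hbR R) (h ▸ hbR R'))
  have hcount := ncard_compl_add_card_le_ncard_edgeSet (D.infDist · O) hp hb hq hqp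
  rw [Nat.card_coe_set_eq] at hcount
  have := Set.ncard_add_ncard_compl O
  omega
end

section
/- Let D and D' be finite bipartite graphs with vertex colorings into cyan and purple vertices such that every purple vertex has degree 2 in both graphs, with D connected and D' connected. Let φ: D' → D be an epimorphism of bipartite graphs (a surjective color-preserving vertex map such that every edge of D lifts to an edge of D'). For a cyan vertex Γ of D write e_Γ = |φ⁻¹(Γ)|, and for a purple vertex x write i_x = |φ⁻¹(x)|. If for every purple vertex x of D and every cyan vertex Γ adjacent to x one has i_x ≥ e_Γ, then β(D) ≤ β(D'). -/
/-!
Since every purple vertex has degree 2, `β = 1 - (#cyan - #purple)`, so it suffices to compare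
`χ = #cyan - #purple`. Giving each vertex `v'` of `D'` the weight `1 / |φ⁻¹(φ v')|` recovers
`χ(D)`, because `φ` is surjective and colour-preserving; hence `χ(D') - χ(D)` is
`Σ_cyan T - Σ_purple T` with `T v' = 1 - 1 / |φ⁻¹(φ v')| ∈ [0, 1)`. The hypothesis `i_x ≥ e_Γ`
makes `T` increase along every edge from a cyan to a purple vertex. In a breadth-first tree of
`D'` rooted at a cyan vertex `r`, every other cyan vertex has a purple parent, and no two share
one because a purple vertex has only two neighbours. Thus `Σ_cyan T ≤ T r + Σ_purple T`, so
`χ(D') - χ(D) < 1`, and integrality finishes the proof.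
-/

open Finset

theorem Fintype.sum_div_ncard_preimage_singleton {α β K : Type*} [Fintype α] [Fintype β]
    [Semifield K] [CharZero K] {f : α → β} (hf : Function.Surjective f) (g : β → K) :
    ∑ a, g (f a) / (f ⁻¹' {f a}).ncard = ∑ b, g b := by
  classical
  rw [← Finset.sum_fiberwise univ f]
  refine Finset.sum_congr rfl fun b _ => ?_
  have hcard : (f ⁻¹' {b}).ncard = #{a | f a = b} := by
    rw [Set.ncard_eq_toFinset_card']
    congr 1
    ext
    simp
  have hpos : #{a | f a = b} ≠ 0 := by
    obtain ⟨a, rfl⟩ := hf b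
    exact (Finset.card_pos.2 ⟨a, by simp⟩).ne'
  rw [Finset.sum_congr rfl fun a ha => by rw [(mem_filter.1 ha).2, hcard], sum_const, nsmul_eq_mul,
    mul_div_cancel₀ _ (by exact_mod_cast hpos)]

namespace SimpleGraph

variable {V : Type*} {G : SimpleGraph V}

noncomputable def betti (G : SimpleGraph V) : ℤ := 1 - Nat.card V + G.edgeSet.ncard

theorem betti_eq_one_sub_sum_sign [Fintype V] {c : V → Bool}
    (hbip : ∀ v w, G.Adj v w → c v ≠ c w)
    (hdeg : ∀ v, c v = false → (G.neighborSet v).ncard = 2) :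
    G.betti = 1 - ∑ v, if c v then 1 else -1 := by
  classical
  have hB : G.IsBipartiteWith ({v | c v = true} : Finset V) ({v | c v = false} : Finset V) := by
    refine ⟨Finset.disjoint_coe.2 (disjoint_filter.2 fun v _ h₁ h₂ => by simp_all), fun v w h => ?_⟩
    have := hbip v w h
    cases hv : c v <;> cases hw : c w <;> simp_all
  have hE : #G.edgeFinset = 2 * #{v | c v = false} := by
    rw [← isBipartiteWith_sum_degrees_eq_card_edges' hB, sum_congr rfl fun v hv => ?_, sum_const,
      smul_eq_mul, mul_comm]
    rw [← card_neighborSet_eq_degree, ← Nat.card_eq_fintype_card, Nat.card_coe_set_eq,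
      hdeg v (mem_filter.1 hv).2]
  have hV : Nat.card V = #{v | c v = true} + #{v | c v = false} := by
    rw [Nat.card_eq_fintype_card, ← card_univ,
      ← card_filter_add_card_filter_not (fun v => c v = true)]
    simp
  rw [betti, ← coe_edgeFinset, Set.ncard_coe_finset, hE, hV, sum_ite, sum_const, sum_const]
  push_cast
  simp only [Bool.not_eq_true]
  ring

theorem Connected.exists_adj_dist_add_one_eq (hconn : G.Connected) {u r : V} (h : u ≠ r) :
    ∃ w, G.Adj u w ∧ G.dist w r + 1 = G.dist u r := by
  obtain ⟨p, hp⟩ := hconn.exists_walk_length_eq_dist u r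
  cases p with
  | nil => exact absurd rfl h
  | @cons _ w _ ha q =>
    refine ⟨w, ha, le_antisymm ?_ ?_⟩
    · simpa [← hp] using dist_le q
    · simpa [dist_eq_one_iff_adj.2 ha, add_comm] using
        hconn.dist_triangle (u := u) (v := w) (w := r)

theorem Connected.eq_of_dist_eq_add_one_of_ncard_neighborSet_le_two [Finite V]
    (hconn : G.Connected) {r w u₁ u₂ : V} (hw : w ≠ r) (hdeg : (G.neighborSet w).ncard ≤ 2)
    (h₁ : G.Adj w u₁) (h₂ : G.Adj w u₂)
    (hd₁ : G.dist u₁ r = G.dist w r + 1) (hd₂ : G.dist u₂ r = G.dist w r + 1) : u₁ = u₂ := by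
  by_contra hne
  obtain ⟨w', hw', hd'⟩ := hconn.exists_adj_dist_add_one_eq hw
  have hsub : ({u₁, u₂, w'} : Set V) ⊆ G.neighborSet w := by
    rintro z (rfl | rfl | rfl) <;> assumption
  have h₁' : u₁ ≠ w' := by rintro rfl; omega
  have h₂' : u₂ ≠ w' := by rintro rfl; omega
  have := Set.ncard_le_ncard hsub (Set.toFinite _)
  rw [Set.ncard_insert_of_notMem (by simp [hne, h₁']), Set.ncard_pair h₂'] at this
  omega

theorem Connected.sum_le_add_sum_of_forall_adj_le {R : Type*} [AddCommMonoid R] [PartialOrder R]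
    [IsOrderedAddMonoid R] [Fintype V] (hconn : G.Connected) {c : V → Bool}
    (hbip : ∀ v w, G.Adj v w → c v ≠ c w)
    (hdeg : ∀ v, c v = false → (G.neighborSet v).ncard ≤ 2)
    {T : V → R} (hT : ∀ v, c v = false → 0 ≤ T v)
    (hmono : ∀ u w, c u = true → G.Adj u w → T u ≤ T w) {r : V} (hr : c r = true) :
    ∑ v with c v = true, T v ≤ T r + ∑ v with c v = false, T v := by
  classical
  have hparent : ∀ u, ∃ w, u ≠ r → G.Adj u w ∧ G.dist w r + 1 = G.dist u r := fun u => by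
    by_cases hu : u = r
    · exact ⟨r, fun h => absurd hu h⟩
    · obtain ⟨w, hw⟩ := hconn.exists_adj_dist_add_one_eq hu
      exact ⟨w, fun _ => hw⟩
  choose p hp using hparent
  have hpurple : ∀ u, c u = true → u ≠ r → c (p u) = false := fun u hu hur => by
    have := hbip _ _ (hp u hur).1
    rw [hu] at this
    exact Bool.eq_false_iff.2 this.symm
  set A := ({v | c v = true} : Finset V).erase r
  have hA : ∀ u ∈ A, u ≠ r ∧ c u = true := fun u hu => by simpa [A] using hu
  have hinj : Set.InjOn p A := fun u₁ hu₁ u₂ hu₂ heq => by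
    obtain ⟨hur₁, hc₁⟩ := hA u₁ hu₁
    obtain ⟨hur₂, hc₂⟩ := hA u₂ hu₂
    have hc := hpurple u₁ hc₁ hur₁
    exact hconn.eq_of_dist_eq_add_one_of_ncard_neighborSet_le_two
      (fun h => by simp [h, hr] at hc) (hdeg _ hc) (hp u₁ hur₁).1.symm
      (heq ▸ (hp u₂ hur₂).1.symm) (hp u₁ hur₁).2.symm (heq ▸ (hp u₂ hur₂).2.symm)
  calc ∑ v with c v = true, T v = T r + ∑ u ∈ A, T u := (add_sum_erase _ _ (by simp [hr])).symm
    _ ≤ T r + ∑ u ∈ A, T (p u) := by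
        gcongr with u hu
        exact hmono u _ (hA u hu).2 (hp u (hA u hu).1).1
    _ = T r + ∑ w ∈ A.image p, T w := by rw [sum_image hinj]
    _ ≤ T r + ∑ v with c v = false, T v := by
        gcongr
        · exact fun w hw _ => hT w (mem_filter.1 hw).2
        · intro w hw
          obtain ⟨u, hu, rfl⟩ := mem_image.1 hw
          simpa using hpurple u (hA u hu).2 (hA u hu).1

theorem Connected.sum_ite_neg_lt_one {K : Type*} [Field K] [LinearOrder K] [IsStrictOrderedRing K]
    [Fintype V] (hconn : G.Connected) {c : V → Bool}
    (hbip : ∀ v w, G.Adj v w → c v ≠ c w)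
    (hdeg : ∀ v, c v = false → (G.neighborSet v).ncard ≤ 2)
    {T : V → K} (hT₀ : ∀ v, 0 ≤ T v) (hT₁ : ∀ v, T v < 1)
    (hmono : ∀ u w, c u = true → G.Adj u w → T u ≤ T w) :
    ∑ v, (if c v then T v else -T v) < 1 := by
  classical
  rw [sum_ite, sum_neg_distrib, ← sub_eq_add_neg]
  simp only [Bool.not_eq_true]
  by_cases h : ∃ r, c r = true
  · obtain ⟨r, hr⟩ := h
    linarith [hconn.sum_le_add_sum_of_forall_adj_le hbip hdeg (fun v _ => hT₀ v) hmono hr, hT₁ r]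
  · rw [sum_eq_zero fun v hv => absurd (mem_filter.1 hv).2 fun hv => h ⟨v, hv⟩]
    linarith [sum_nonneg fun v (_ : v ∈ ({v | c v = false} : Finset V)) => hT₀ v]

end SimpleGraph

theorem stmt5_general {V V' : Type*} [Finite V] [Finite V']
    (D : SimpleGraph V) (D' : SimpleGraph V')
    (c : V → Bool) (c' : V' → Bool)
    (hbip : ∀ v w, D.Adj v w → c v ≠ c w)
    (hbip' : ∀ v w, D'.Adj v w → c' v ≠ c' w)
    (hdeg : ∀ v, c v = false → (D.neighborSet v).ncard = 2)
    (hdeg' : ∀ v, c' v = false → (D'.neighborSet v).ncard = 2)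
    (hconn' : D'.Connected)
    (f : V' → V)
    (hcol : ∀ v, c (f v) = c' v)
    (hhom : ∀ v w, D'.Adj v w → D.Adj (f v) (f w))
    (hsurj : Function.Surjective f)
    (hie : ∀ x Γ, c x = false → c Γ = true → D.Adj x Γ →
      (f ⁻¹' {Γ}).ncard ≤ (f ⁻¹' {x}).ncard) :
    1 - (Nat.card V : ℤ) + (D.edgeSet.ncard : ℤ) ≤
      1 - (Nat.card V' : ℤ) + (D'.edgeSet.ncard : ℤ) := by
  have := Fintype.ofFinite V
  have := Fintype.ofFinite V'
  set E : V' → ℚ := fun v' => ((f ⁻¹' {f v'}).ncard : ℚ)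
  have hE : ∀ v', 1 ≤ E v' := fun v' =>
    Nat.one_le_cast.2 ((Set.ncard_pos (s := f ⁻¹' {f v'}) (Set.toFinite _)).2 ⟨v', rfl⟩)
  have hmono : ∀ u w, c' u = true → D'.Adj u w → 1 - 1 / E u ≤ 1 - 1 / E w := by
    intro u w hu hadj
    have hw : c' w = false := Bool.eq_false_iff.2 (hu ▸ hbip' u w hadj).symm
    have : E u ≤ E w := Nat.cast_le.2 <|
      hie (f w) (f u) (by rw [hcol, hw]) (by rw [hcol, hu]) (hhom _ _ hadj).symm
    have := hE u
    gcongr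
  have hlt := hconn'.sum_ite_neg_lt_one hbip' (fun v hv => (hdeg' v hv).le)
    (fun v => sub_nonneg.2 ((div_le_one (by linarith [hE v])).2 (hE v)))
    (fun v => sub_lt_self _ (one_div_pos.2 (by linarith [hE v]))) hmono
  have hfib : ∑ v, (if c v then 1 else -1 : ℚ) = ∑ v', (if c' v' then 1 else -1) / E v' := by
    rw [← Fintype.sum_div_ncard_preimage_singleton hsurj]
    simp only [hcol, E]
  change D.betti ≤ D'.betti
  rw [SimpleGraph.betti_eq_one_sub_sum_sign hbip hdeg,
    SimpleGraph.betti_eq_one_sub_sum_sign hbip' hdeg', sub_le_sub_iff_left, ← Int.lt_add_one_iff,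
    ← Int.cast_lt (R := ℚ)]
  push_cast
  rw [hfib, ← sub_lt_iff_lt_add', ← sum_sub_distrib]
  refine lt_of_eq_of_lt (sum_congr rfl fun v' _ => ?_) hlt
  split_ifs <;> ring

/-- Let `D`, `D'` be finite connected bipartite graphs (colorings `c`, `c'`
into cyan = `true` and purple = `false` vertices) in which every purple vertex has
degree 2, and let `f : D' → D` be an epimorphism of bipartite graphs.  Writing
`e_Γ = |f⁻¹(Γ)|` for cyan vertices `Γ` and `i_x = |f⁻¹(x)|` for purple vertices `x`,
if `i_x ≥ e_Γ` whenever `x` is purple and adjacent to the cyan vertex `Γ`, then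
`β(D) ≤ β(D')`, where `β = 1 - |V| + |E|` is the Betti number. -/
theorem stmt5 {V V' : Type*} [Finite V] [Finite V']
    (D : SimpleGraph V) (D' : SimpleGraph V')
    (c : V → Bool) (c' : V' → Bool)
    (hbip : ∀ v w, D.Adj v w → c v ≠ c w)
    (hbip' : ∀ v w, D'.Adj v w → c' v ≠ c' w)
    (hdeg : ∀ v, c v = false → (D.neighborSet v).ncard = 2)
    (hdeg' : ∀ v, c' v = false → (D'.neighborSet v).ncard = 2)
    (hconn : D.Connected) (hconn' : D'.Connected)
    (f : V' → V)
    (hcol : ∀ v, c (f v) = c' v)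
    (hhom : ∀ v w, D'.Adj v w → D.Adj (f v) (f w))
    (hsurj : Function.Surjective f)
    (hlift : ∀ v w, D.Adj v w → ∃ v' w', D'.Adj v' w' ∧ f v' = v ∧ f w' = w)
    (hie : ∀ x Γ, c x = false → c Γ = true → D.Adj x Γ →
      (f ⁻¹' {Γ}).ncard ≤ (f ⁻¹' {x}).ncard) :
    1 - (Nat.card V : ℤ) + (D.edgeSet.ncard : ℤ) ≤
      1 - (Nat.card V' : ℤ) + (D'.edgeSet.ncard : ℤ) :=
  stmt5_general D D' c c' hbip hbip' hdeg hdeg' hconn' f hcol hhom hsurj hie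
end

section
/- Let K be a field with a henselian discrete valuation w whose residue field κ has characteristic different from 2. Let ℓ ∈ ℕ. If the level of κ satisfies s(κ) ≥ 2^{ℓ+1}, then ρ_ℓ(K) ≤ ρ_ℓ(κ); if s(κ) = 2^ℓ, then ρ_ℓ(K) ≤ 1 + ρ_ℓ(κ). Here ρ_ℓ(L) = log₂ of the index of the group of nonzero sums of 2^ℓ squares inside the group of nonzero sums of 2^{ℓ+1} squares in L. -/
/-- The set of elements of `K` that are sums of `m` squares. -/
def sosN (K : Type*) [Field K] (m : ℕ) : Set K :=
  {x | ∃ f : Fin m → K, x = ∑ i, f i ^ 2}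

/-- The set of cosets of the (Pfister) group of nonzero sums of `2^ℓ` squares inside
the group of nonzero sums of `2^(ℓ+1)` squares; its cardinality is `2 ^ ρ_ℓ(K)`,
where `ρ_ℓ(K)` is the `ℓ`-th Pfister index of `K`. -/
def pfisterCosets (K : Type*) [Field K] (ℓ : ℕ) : Set (Set K) :=
  {S | ∃ x : K, x ≠ 0 ∧ x ∈ sosN K (2 ^ (ℓ + 1)) ∧
    S = {y | ∃ t : K, t ≠ 0 ∧ t ∈ sosN K (2 ^ ℓ) ∧ y = x * t}}

/-!
Fix a uniformizer `ϖ` and write `x ∈ Kˣ` as `x = u ϖ^n` with `u ∈ Oˣ`. If `s(κ) ≥ m`, a nonzero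
sum of `m` squares in `K` has `n` even and `ū` a sum of `m` squares in `κ`: divide the summands by
one of minimal valuation, and the level bound forbids cancellation among the residues.
Conversely Hensel's lemma lifts `ū ∈ Σ^m κ²` to `u ∈ Σ^m K²`. So once `s(κ) ≥ 2^ℓ`, the coset
of `x` modulo nonzero sums of `2^ℓ` squares only depends on the coset of `ū` in `κ` and on
`n mod 2`. If `s(κ) ≥ 2^(ℓ+1)`, every `x ∈ Σ^(2^(ℓ+1)) K²` has `n` even and
`ū ∈ Σ^(2^(ℓ+1)) κ²`; if `s(κ) = 2^ℓ`, every element of `κ` is a sum of `2^ℓ + 1` squares, and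
the parity of `n` accounts for the factor `2`.
-/

section SumsOfSquares

variable {L : Type*} [Field L]

lemma zero_mem_sosN (m : ℕ) : (0 : L) ∈ sosN L m :=
  ⟨0, by simp⟩

lemma add_mem_sosN {x y : L} {m n : ℕ} (hx : x ∈ sosN L m) (hy : y ∈ sosN L n) :
    x + y ∈ sosN L (m + n) := by
  obtain ⟨f, rfl⟩ := hx
  obtain ⟨g, rfl⟩ := hy
  exact ⟨Fin.append f g, by simp [Fin.sum_univ_add]⟩

lemma sosN_mono {m n : ℕ} (h : m ≤ n) : sosN L m ⊆ sosN L n := fun x hx => by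
  simpa [Nat.add_sub_cancel' h] using add_mem_sosN hx (zero_mem_sosN (n - m))

lemma mul_sq_mem_sosN {x : L} {m : ℕ} (hx : x ∈ sosN L m) (c : L) :
    x * c ^ 2 ∈ sosN L m := by
  obtain ⟨f, rfl⟩ := hx
  exact ⟨fun i => f i * c, by simp [Finset.sum_mul, mul_pow]⟩

lemma neg_one_mem_sosN_of_sum_sq_eq_zero {m : ℕ} {f : Fin (m + 1) → L}
    (h : ∑ i, f i ^ 2 = 0) {i₀ : Fin (m + 1)} (hi₀ : f i₀ ≠ 0) :
    (-1 : L) ∈ sosN L m := by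
  refine ⟨fun j => f (i₀.succAbove j) / f i₀, ?_⟩
  have hsum := Fin.sum_univ_succAbove (fun i => f i ^ 2) i₀
  simp only [div_pow, ← Finset.sum_div]
  rw [eq_div_iff (pow_ne_zero 2 hi₀)]
  linear_combination hsum - h

lemma eq_zero_of_sum_sq_eq_zero {m : ℕ} (hlev : ∀ m' < m, (-1 : L) ∉ sosN L m')
    {f : Fin m → L} (h : ∑ i, f i ^ 2 = 0) (i : Fin m) : f i = 0 := by
  by_contra hi
  cases m with
  | zero => exact i.elim0
  | succ n => exact hlev n n.lt_succ_self (neg_one_mem_sosN_of_sum_sq_eq_zero h hi)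

lemma mem_sosN_succ_of_neg_one_mem (h2 : (2 : L) ≠ 0) {m : ℕ} (hneg : (-1 : L) ∈ sosN L m)
    (a : L) : a ∈ sosN L (1 + m) := by
  have hsq : ((a + 1) / 2) ^ 2 ∈ sosN L 1 := ⟨fun _ => (a + 1) / 2, by simp⟩
  have key : a = ((a + 1) / 2) ^ 2 + -1 * ((a - 1) / 2) ^ 2 := by field_simp; ring
  rw [key]
  exact add_mem_sosN hsq (mul_sq_mem_sosN hneg _)

variable (L) in
def sosCoset (m : ℕ) (x : L) : Set L :=
  {y | ∃ t, t ≠ 0 ∧ t ∈ sosN L m ∧ y = x * t}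

lemma mem_sosCoset_iff {m : ℕ} {x : L} (hx : x ≠ 0) (y : L) :
    y ∈ sosCoset L m x ↔ y ≠ 0 ∧ x⁻¹ * y ∈ sosN L m := by
  constructor
  · rintro ⟨t, ht, htm, rfl⟩
    exact ⟨mul_ne_zero hx ht, by rwa [inv_mul_cancel_left₀ hx]⟩
  · rintro ⟨hy, hym⟩
    exact ⟨x⁻¹ * y, mul_ne_zero (inv_ne_zero hx) hy, hym, (mul_inv_cancel_left₀ hx y).symm⟩

lemma pfisterCosets_eq_image (ℓ : ℕ) :
    pfisterCosets L ℓ =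
      (fun x : Lˣ => sosCoset L (2 ^ ℓ) x) '' {x | (x : L) ∈ sosN L (2 ^ (ℓ + 1))} := by
  ext S
  constructor
  · rintro ⟨x, hx, hxm, rfl⟩
    exact ⟨Units.mk0 x hx, hxm, rfl⟩
  · rintro ⟨x, hxm, rfl⟩
    exact ⟨x, x.ne_zero, hxm, rfl⟩

end SumsOfSquares

lemma Set.encard_image_le_of_mapsTo {α β γ : Type*} {g : α → β} {k : α → γ} {s : Set α}
    {t : Set γ} (hk : MapsTo k s t) (hg : ∀ x ∈ s, ∀ y ∈ s, k x = k y → g x = g y) :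
    (g '' s).encard ≤ t.encard := by
  rcases isEmpty_or_nonempty α with hα | hα
  · simp [Set.eq_empty_of_isEmpty s]
  have hsub : g '' s ⊆ (g ∘ Function.invFunOn k s) '' (k '' s) := by
    rintro _ ⟨x, hx, rfl⟩
    have hex : ∃ y ∈ s, k y = k x := ⟨x, hx, rfl⟩
    exact ⟨k x, mem_image_of_mem k hx,
      hg _ (Function.invFunOn_mem hex) x hx (Function.invFunOn_eq hex)⟩
  calc (g '' s).encard ≤ ((g ∘ Function.invFunOn k s) '' (k '' s)).encard :=
        encard_le_encard hsub
    _ ≤ (k '' s).encard := encard_image_le _ _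
    _ ≤ t.encard := encard_le_encard hk.image_subset

open IsLocalRing

open Polynomial in
lemma HenselianLocalRing.isSquare_of_residue_eq_one {R : Type*} [CommRing R]
    [HenselianLocalRing R] (h2 : (2 : ResidueField R) ≠ 0) {a : R} (ha : residue R a = 1) :
    IsSquare a := by
  obtain ⟨v, hv, -⟩ := HenselianLocalRing.is_henselian (X ^ 2 - C a)
    (monic_X_pow_sub_C a two_ne_zero) 1
    (by rw [← residue_eq_zero_iff]; simp [ha])
    (by simpa [one_add_one_eq_two] using
      (residue_ne_zero_iff_isUnit (2 : R)).1 (by rwa [map_ofNat]))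
  exact ⟨v, by simpa [sub_eq_zero, sq, eq_comm] using hv⟩

lemma isUnit_sum_sq_of_isUnit {O : Type*} [CommRing O] [IsLocalRing O] {m : ℕ}
    (hlev : ∀ m' < m, (-1 : ResidueField O) ∉ sosN (ResidueField O) m')
    {b : Fin m → O} {i₀ : Fin m} (hb : IsUnit (b i₀)) : IsUnit (∑ i, b i ^ 2) := by
  rw [← residue_ne_zero_iff_isUnit] at hb ⊢
  refine fun h => hb (eq_zero_of_sum_sq_eq_zero hlev (f := fun i => residue O (b i)) ?_ i₀)
  simpa using h

lemma algebraMap_mem_sosN_of_residue_mem {O : Type*} [CommRing O] [HenselianLocalRing O]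
    (h2 : (2 : ResidueField O) ≠ 0) {K : Type*} [Field K] [Algebra O K] {m : ℕ} (u : Oˣ)
    (hu : residue O u ∈ sosN (ResidueField O) m) : algebraMap O K u ∈ sosN K m := by
  obtain ⟨c, hc⟩ := hu
  choose b hb using fun i => residue_surjective (R := O) (c i)
  have hres : residue O (∑ i, b i ^ 2) = residue O u := by simp [hb, hc]
  have hw : IsUnit (∑ i, b i ^ 2) := by
    rw [← residue_ne_zero_iff_isUnit, hres, residue_ne_zero_iff_isUnit]
    exact u.isUnit
  obtain ⟨v, hv⟩ := HenselianLocalRing.isSquare_of_residue_eq_one h2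
    (a := u * hw.unit⁻¹) (by simp [hres])
  have hu : (u : O) = (∑ i, b i ^ 2) * v ^ 2 := by
    rw [sq, ← hv, mul_left_comm, IsUnit.mul_val_inv, mul_one]
  rw [hu, map_mul, map_pow]
  exact mul_sq_mem_sosN ⟨fun i => algebraMap O K (b i), by simp⟩ _

lemma ValuationRing.exists_eq_mul_algebraMap {O K : Type*} [CommRing O] [IsDomain O]
    [ValuationRing O] [Field K] [Algebra O K] [IsFractionRing O K] {ι : Type*} [Fintype ι]
    [Nonempty ι] (f : ι → K) :
    ∃ (i₀ : ι) (b : ι → O), b i₀ = 1 ∧ ∀ i, f i = f i₀ * algebraMap O K (b i) := by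
  obtain ⟨i₀, -, hmax⟩ :=
    Finset.univ.exists_max_image (fun i => valuation O K (f i)) Finset.univ_nonempty
  by_cases h0 : f i₀ = 0
  · refine ⟨i₀, 1, rfl, fun i => ?_⟩
    simpa [h0] using hmax i (Finset.mem_univ i)
  have hint : ∀ i, ∃ b : O, algebraMap O K b = f i / f i₀ := fun i => by
    rw [← mem_integer_iff, Valuation.mem_integer_iff, map_div₀]
    exact div_le_one_of_le₀ (hmax i (Finset.mem_univ i)) zero_le
  choose b hb using hint
  refine ⟨i₀, b, IsFractionRing.injective O K ?_, fun i => ?_⟩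
  · rw [hb, div_self h0, map_one]
  · rw [hb, mul_div_cancel₀ _ h0]

namespace IsDiscreteValuationRing

variable {O : Type*} [CommRing O] (K : Type*) [Field K] [Algebra O K] [IsFractionRing O K]
  {ϖ : O} (hϖ : Irreducible ϖ)

noncomputable def unitsZPowHom : Oˣ × Multiplicative ℤ →* Kˣ :=
  (Units.map (algebraMap O K : O →* K)).coprod
    (zpowersHom Kˣ (Units.mk0 (algebraMap O K ϖ) (by simpa using hϖ.ne_zero)))

lemma coe_unitsZPowHom_apply (p : Oˣ × Multiplicative ℤ) :
    (unitsZPowHom K hϖ p : K) = algebraMap O K p.1 * algebraMap O K ϖ ^ p.2.toAdd := by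
  simp [unitsZPowHom]

lemma unitsZPowHom_injective : Function.Injective (unitsZPowHom K hϖ) := by
  refine (injective_iff_map_eq_one _).2 fun ⟨u, n⟩ h => ?_
  replace h := congrArg Units.val h
  rw [coe_unitsZPowHom_apply, Units.val_one] at h
  suffices hn : n.toAdd = 0 by
    obtain rfl : n = 1 := hn
    simp only [toAdd_one, zpow_zero, mul_one] at h
    rw [← map_one (algebraMap O K)] at h
    exact Prod.ext (Units.ext (IsFractionRing.injective O K h)) rfl
  have hϖK : algebraMap O K ϖ ≠ 0 := by simpa using hϖ.ne_zero
  obtain ⟨k, hk | hk⟩ := Int.eq_nat_or_neg n.toAdd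
  all_goals
    suffices IsUnit (ϖ ^ k) by
      rw [isUnit_pow_iff_of_not_isUnit hϖ.not_isUnit] at this
      simp [hk, this]
  · rw [hk, zpow_natCast, ← map_pow, ← map_mul, ← map_one (algebraMap O K)] at h
    exact IsUnit.of_mul_eq_one_right _ (IsFractionRing.injective O K h)
  · rw [hk, zpow_neg, zpow_natCast, mul_inv_eq_one₀ (pow_ne_zero _ hϖK), ← map_pow] at h
    rw [← IsFractionRing.injective O K h]
    exact u.isUnit

variable [IsDomain O] [IsDiscreteValuationRing O]

lemma unitsZPowHom_surjective : Function.Surjective (unitsZPowHom K hϖ) := fun x => by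
  obtain ⟨n, u, hx⟩ := exists_units_eq_smul_zpow_of_irreducible hϖ x.ne_zero
  exact ⟨(u, .ofAdd n), Units.ext (by simp [coe_unitsZPowHom_apply, hx, Units.smul_def,
    Algebra.smul_def])⟩

noncomputable def unitsZPowEquiv : Oˣ × Multiplicative ℤ ≃* Kˣ :=
  MulEquiv.ofBijective _ ⟨unitsZPowHom_injective K hϖ, unitsZPowHom_surjective K hϖ⟩

lemma coe_unitsZPowEquiv_apply (p : Oˣ × Multiplicative ℤ) :
    (unitsZPowEquiv K hϖ p : K) = algebraMap O K p.1 * algebraMap O K ϖ ^ p.2.toAdd :=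
  coe_unitsZPowHom_apply K hϖ p

noncomputable def unitPart : Kˣ →* Oˣ :=
  (MonoidHom.fst _ _).comp (unitsZPowEquiv K hϖ).symm.toMonoidHom

noncomputable def zpowPart (x : Kˣ) : ℤ :=
  ((unitsZPowEquiv K hϖ).symm x).2.toAdd

variable {K hϖ}

lemma coe_eq_unitPart_mul_zpow (x : Kˣ) :
    (x : K) = algebraMap O K (unitPart K hϖ x) * algebraMap O K ϖ ^ zpowPart K hϖ x := by
  conv_lhs => rw [← (unitsZPowEquiv K hϖ).apply_symm_apply x, coe_unitsZPowEquiv_apply]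
  rfl

lemma zpowPart_mul (x y : Kˣ) : zpowPart K hϖ (x * y) = zpowPart K hϖ x + zpowPart K hϖ y := by
  simp [zpowPart]

lemma zpowPart_inv (x : Kˣ) : zpowPart K hϖ x⁻¹ = - zpowPart K hϖ x := by
  simp [zpowPart]

lemma unitsZPowEquiv_symm_map (w : Oˣ) :
    (unitsZPowEquiv K hϖ).symm (Units.map (algebraMap O K : O →* K) w) = (w, 1) :=
  (MulEquiv.symm_apply_eq _).2 (Units.ext (by simp [coe_unitsZPowEquiv_apply]))

lemma unitPart_map (w : Oˣ) : unitPart K hϖ (Units.map (algebraMap O K : O →* K) w) = w := by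
  simp [unitPart, unitsZPowEquiv_symm_map]

lemma zpowPart_map (w : Oˣ) : zpowPart K hϖ (Units.map (algebraMap O K : O →* K) w) = 0 := by
  simp [zpowPart, unitsZPowEquiv_symm_map]

end IsDiscreteValuationRing

open IsDiscreteValuationRing

lemma exists_eq_sq_mul_of_mem_sosN {O K : Type*} [CommRing O] [IsDomain O] [ValuationRing O]
    [Field K] [Algebra O K] [IsFractionRing O K] {m : ℕ}
    (hlev : ∀ m' < m, (-1 : ResidueField O) ∉ sosN (ResidueField O) m')
    {x : K} (hx : x ≠ 0) (hxm : x ∈ sosN K m) :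
    ∃ (c : Kˣ) (w : Oˣ), x = c ^ 2 * algebraMap O K w ∧
      residue O w ∈ sosN (ResidueField O) m := by
  obtain ⟨f, rfl⟩ := hxm
  cases isEmpty_or_nonempty (Fin m)
  · simp at hx
  obtain ⟨i₀, b, hb₁, hf⟩ := ValuationRing.exists_eq_mul_algebraMap (O := O) f
  have hw : IsUnit (∑ i, b i ^ 2) := isUnit_sum_sq_of_isUnit hlev (i₀ := i₀) (by simp [hb₁])
  have hsum : ∑ i, f i ^ 2 = f i₀ ^ 2 * algebraMap O K (∑ i, b i ^ 2) := calc
    ∑ i, f i ^ 2 = ∑ i, (f i₀ * algebraMap O K (b i)) ^ 2 :=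
      Finset.sum_congr rfl fun i _ => by rw [← hf i]
    _ = f i₀ ^ 2 * algebraMap O K (∑ i, b i ^ 2) := by simp [mul_pow, Finset.mul_sum]
  have hc : f i₀ ≠ 0 := fun h => hx (by simp [hsum, h])
  exact ⟨Units.mk0 _ hc, hw.unit, hsum, ⟨fun i => residue O (b i), by simp⟩⟩

section Henselian

variable {O : Type*} [CommRing O] [IsDomain O] [IsDiscreteValuationRing O] [HenselianLocalRing O]
  {K : Type*} [Field K] [Algebra O K] [IsFractionRing O K] {ϖ : O} {hϖ : Irreducible ϖ}
  (h2 : (2 : ResidueField O) ≠ 0) {m : ℕ}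
  (hlev : ∀ m' < m, (-1 : ResidueField O) ∉ sosN (ResidueField O) m')
include h2 hlev

lemma coe_mem_sosN_iff (x : Kˣ) :
    (x : K) ∈ sosN K m ↔
      Even (zpowPart K hϖ x) ∧ residue O (unitPart K hϖ x) ∈ sosN (ResidueField O) m := by
  constructor
  · intro hx
    obtain ⟨c, w, hxcw, hw⟩ := exists_eq_sq_mul_of_mem_sosN hlev x.ne_zero hx
    obtain rfl : x = c ^ 2 * Units.map (algebraMap O K : O →* K) w := Units.ext (by simpa)
    refine ⟨⟨zpowPart K hϖ c, by simp [sq, zpowPart_mul, zpowPart_map]⟩, ?_⟩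
    simpa [unitPart_map, mul_comm] using mul_sq_mem_sosN hw (residue O (unitPart K hϖ c))
  · rintro ⟨⟨k, hk⟩, hres⟩
    rw [coe_eq_unitPart_mul_zpow (hϖ := hϖ) x, hk, ← two_mul, zpow_mul', zpow_two, ← sq]
    exact mul_sq_mem_sosN (algebraMap_mem_sosN_of_residue_mem h2 _ hres) _

lemma coe_mem_sosCoset_iff (x y : Kˣ) :
    (y : K) ∈ sosCoset K m x ↔ Even (zpowPart K hϖ y - zpowPart K hϖ x) ∧
      residue O (unitPart K hϖ y) ∈ sosCoset (ResidueField O) m (residue O (unitPart K hϖ x)) := by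
  have hres (u : Oˣ) : residue O u ≠ 0 := (residue_ne_zero_iff_isUnit _).2 u.isUnit
  rw [mem_sosCoset_iff x.ne_zero, mem_sosCoset_iff (hres _), ← Units.val_inv_eq_inv_val,
    ← Units.val_mul, coe_mem_sosN_iff (hϖ := hϖ) h2 hlev, zpowPart_mul, zpowPart_inv,
    neg_add_eq_sub]
  simp [hres, map_units_inv]

lemma sosCoset_eq_of_residue_sosCoset_eq {x y : Kˣ}
    (hres : sosCoset (ResidueField O) m (residue O (unitPart K hϖ x)) =
      sosCoset (ResidueField O) m (residue O (unitPart K hϖ y)))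
    (hpar : (zpowPart K hϖ x : ZMod 2) = zpowPart K hϖ y) :
    sosCoset K m x = sosCoset K m y := by
  ext z
  by_cases hz : z = 0
  · simp [mem_sosCoset_iff, hz]
  lift z to Kˣ using IsUnit.mk0 z hz
  rw [coe_mem_sosCoset_iff h2 hlev, coe_mem_sosCoset_iff h2 hlev, hres,
    ← ZMod.intCast_eq_zero_iff_even, ← ZMod.intCast_eq_zero_iff_even, Int.cast_sub,
    Int.cast_sub, hpar]

end Henselian

/-- let `K` be a field with a henselian discrete valuation whose valuation
ring is `O` and whose residue field `κ` has characteristic `≠ 2`.  If the level of `κ`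
satisfies `s(κ) ≥ 2^(ℓ+1)` then `ρ_ℓ(K) ≤ ρ_ℓ(κ)`, and if `s(κ) = 2^ℓ` then
`ρ_ℓ(K) ≤ 1 + ρ_ℓ(κ)`; in terms of the coset sets, the index
`[ (Σ^{2^(ℓ+1)} K²)^× : (Σ^{2^ℓ} K²)^× ]` is at most the corresponding index for `κ`,
respectively at most twice it. -/
theorem stmt8 {K O : Type*} [Field K] [CommRing O] [IsDomain O]
    [IsDiscreteValuationRing O] [HenselianLocalRing O]
    [Algebra O K] [IsFractionRing O K] (ℓ : ℕ)
    (hchar : (2 : IsLocalRing.ResidueField O) ≠ 0) :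
    ((∀ m, m < 2 ^ (ℓ + 1) → (-1 : IsLocalRing.ResidueField O) ∉
        sosN (IsLocalRing.ResidueField O) m) →
      (pfisterCosets K ℓ).encard ≤ (pfisterCosets (IsLocalRing.ResidueField O) ℓ).encard) ∧
    (((-1 : IsLocalRing.ResidueField O) ∈ sosN (IsLocalRing.ResidueField O) (2 ^ ℓ) ∧
        ∀ m, m < 2 ^ ℓ → (-1 : IsLocalRing.ResidueField O) ∉
          sosN (IsLocalRing.ResidueField O) m) →
      (pfisterCosets K ℓ).encard ≤
        2 * (pfisterCosets (IsLocalRing.ResidueField O) ℓ).encard) := by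
  obtain ⟨ϖ, hϖ⟩ := exists_irreducible O
  let k (x : Kˣ) : Set (ResidueField O) × ZMod 2 :=
    (sosCoset _ (2 ^ ℓ) (residue O (unitPart K hϖ x)), zpowPart K hϖ x)
  have hk (hlev : ∀ m < 2 ^ ℓ, (-1 : ResidueField O) ∉ sosN _ m) (x y : Kˣ) (hxy : k x = k y) :
      sosCoset K (2 ^ ℓ) x = sosCoset K (2 ^ ℓ) y :=
    sosCoset_eq_of_residue_sosCoset_eq hchar hlev (congrArg Prod.fst hxy) (congrArg Prod.snd hxy)
  have hres (x : Kˣ) : residue O (unitPart K hϖ x) ≠ 0 :=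
    (residue_ne_zero_iff_isUnit _).2 (Units.isUnit _)
  rw [pfisterCosets_eq_image (L := K)]
  constructor
  · intro hlev
    have hlev' : ∀ m < 2 ^ ℓ, (-1 : ResidueField O) ∉ sosN _ m := fun m hm =>
      hlev m (hm.trans (Nat.pow_lt_pow_succ one_lt_two))
    calc _ ≤ (pfisterCosets (ResidueField O) ℓ ×ˢ ({0} : Set (ZMod 2))).encard :=
          Set.encard_image_le_of_mapsTo (k := k) (fun x hx => ?_) fun x _ y _ => hk hlev' x y
      _ = _ := by rw [Set.encard_prod, Set.encard_singleton, mul_one]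
    obtain ⟨heven, hsos⟩ := (coe_mem_sosN_iff hchar hlev x).1 hx
    exact ⟨⟨_, hres x, hsos, rfl⟩, ZMod.intCast_eq_zero_iff_even.2 heven⟩
  · rintro ⟨hneg, hlev⟩
    have hle : 1 + 2 ^ ℓ ≤ 2 ^ (ℓ + 1) := by rw [pow_succ]; linarith [Nat.one_le_two_pow (n := ℓ)]
    have hall (a : ResidueField O) : a ∈ sosN _ (2 ^ (ℓ + 1)) :=
      sosN_mono hle (mem_sosN_succ_of_neg_one_mem hchar hneg a)
    calc _ ≤ (pfisterCosets (ResidueField O) ℓ ×ˢ (Set.univ : Set (ZMod 2))).encard :=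
          Set.encard_image_le_of_mapsTo (k := k) (fun x _ => ⟨⟨_, hres x, hall _, rfl⟩, trivial⟩)
            fun x _ y _ => hk hlev x y
      _ = _ := by simp [Set.encard_prod, Set.encard_univ, mul_comm]
end

section
/- Let K be a field of characteristic ≠ 2 satisfying the local-global principle that every quadratic form in at least 3 variables over K isotropic over all completions at a set Ω of discrete valuations is isotropic over K. Suppose f ∈ K^× is a sum of 2^{ℓ+1} squares in K (ℓ ≥ 1), and f is a sum of 2^ℓ squares in the completion K^w for every w ∈ Ω. Then f is a sum of 2^ℓ squares in K. -/
/-!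
The form `X₁² + ⋯ + X_n² - g Y²` (`n = 2 ^ ℓ`, so `n + 1 ≥ 3` variables) is isotropic over every
completion, with `Y = 1`, hence over `K`. A zero with `Y ≠ 0` writes `g` as `∑ (Xⱼ / Y)²`; a zero
with `Y = 0` makes the sum of `n` squares isotropic, and an isotropic sum of squares is universal
in characteristic `≠ 2`.
-/

open Finset

section SumsOfSquares

variable {K : Type*} [Field K]

/-- If `z` is isotropic with `z j₀ ≠ 0`, then `α • z + e_{j₀}` with `α = (c - 1) / (2 z j₀)` has
square sum `2 α z j₀ + 1 = c`. -/
theorem sosN_eq_univ_of_sum_sq_eq_zero (h2 : (2 : K) ≠ 0) {n : ℕ} {z : Fin n → K} {j₀ : Fin n}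
    (hz : z j₀ ≠ 0) (hsum : ∑ j, z j ^ 2 = 0) : sosN K n = Set.univ := by
  refine Set.eq_univ_of_forall fun c => ?_
  set α := (c - 1) / (2 * z j₀)
  set e : Fin n → K := Pi.single j₀ 1
  refine ⟨fun j => α * z j + e j, ?_⟩
  have hexpand : ∑ j, (α * z j + e j) ^ 2
      = α ^ 2 * ∑ j, z j ^ 2 + 2 * α * ∑ j, z j * e j + ∑ j, e j ^ 2 := by
    simp only [mul_sum, ← sum_add_distrib]
    exact sum_congr rfl fun j _ => by ring
  rw [hexpand, hsum]
  simp only [e, Pi.single_apply, mul_ite, mul_one, mul_zero, ite_pow, one_pow,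
    zero_pow two_ne_zero, sum_ite_eq', mem_univ, if_true]
  have hα : α * (2 * z j₀) = c - 1 := div_mul_cancel₀ _ (mul_ne_zero h2 hz)
  linear_combination -hα

theorem mem_sosN_of_sum_sq_eq_mul_sq {n : ℕ} {x : Fin n → K} {g y : K} (hy : y ≠ 0)
    (h : ∑ j, x j ^ 2 = g * y ^ 2) : g ∈ sosN K n := by
  refine ⟨fun j => x j / y, ?_⟩
  simp only [div_pow, ← sum_div, h]
  field_simp

theorem sum_snoc_one_neg_mul_sq {R : Type*} [CommRing R] {n : ℕ} (g : R) (x : Fin (n + 1) → R) :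
    ∑ j, (Fin.snoc (1 : Fin n → R) (-g) : Fin (n + 1) → R) j * x j ^ 2
      = ∑ j : Fin n, x j.castSucc ^ 2 - g * x (Fin.last n) ^ 2 := by
  simp [Fin.sum_univ_castSucc, sub_eq_add_neg]

theorem mem_sosN_of_isotropic_snoc (h2 : (2 : K) ≠ 0) {n : ℕ} {g : K} {x : Fin (n + 1) → K}
    (hx : ∃ j, x j ≠ 0)
    (h : ∑ j, (Fin.snoc (1 : Fin n → K) (-g) : Fin (n + 1) → K) j * x j ^ 2 = 0) :
    g ∈ sosN K n := by
  rw [sum_snoc_one_neg_mul_sq, sub_eq_zero] at h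
  by_cases hlast : x (Fin.last n) = 0
  · obtain ⟨j, hj⟩ := hx
    obtain ⟨k, rfl⟩ : ∃ k : Fin n, k.castSucc = j := by
      rcases Fin.eq_castSucc_or_eq_last j with ⟨k, rfl⟩ | rfl
      exacts [⟨k, rfl⟩, absurd hlast hj]
    rw [hlast, zero_pow two_ne_zero, mul_zero] at h
    rw [sosN_eq_univ_of_sum_sq_eq_zero (z := fun k => x k.castSucc) h2 hj h]
    trivial
  · exact mem_sosN_of_sum_sq_eq_mul_sq hlast h

end SumsOfSquares

theorem exists_isotropic_snoc_of_mem_sosN {R L : Type*} [CommRing R] [Field L] (φ : R →+* L)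
    {n : ℕ} {g : R} (hg : φ g ∈ sosN L n) :
    ∃ x : Fin (n + 1) → L, (∃ j, x j ≠ 0) ∧
      ∑ j, φ ((Fin.snoc (1 : Fin n → R) (-g) : Fin (n + 1) → R) j) * x j ^ 2 = 0 := by
  obtain ⟨y, hy⟩ := hg
  refine ⟨Fin.snoc y 1, ⟨Fin.last n, by simp⟩, ?_⟩
  simp [Fin.sum_univ_castSucc, ← hy]

theorem stmt17_general {K : Type*} [Field K] (hchar : (2 : K) ≠ 0)
    {ι : Type*} (Kw : ι → Type*) [∀ i, Field (Kw i)] (f : ∀ i, K →+* Kw i)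
    (hlgp : ∀ n, 3 ≤ n → ∀ a : Fin n → K, (∀ j, a j ≠ 0) →
      (∀ i, ∃ x : Fin n → Kw i, (∃ j, x j ≠ 0) ∧ ∑ j, f i (a j) * x j ^ 2 = 0) →
      ∃ x : Fin n → K, (∃ j, x j ≠ 0) ∧ ∑ j, a j * x j ^ 2 = 0)
    (ℓ : ℕ) (hℓ : 1 ≤ ℓ) (g : K) (hg0 : g ≠ 0)
    (hloc : ∀ i, ∃ y : Fin (2 ^ ℓ) → Kw i, f i g = ∑ j, y j ^ 2) :
    g ∈ sosN K (2 ^ ℓ) := by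
  have hdim : 3 ≤ 2 ^ ℓ + 1 := by
    have := Nat.pow_le_pow_right two_pos hℓ
    omega
  have hcoeff : ∀ j, (Fin.snoc (1 : Fin (2 ^ ℓ) → K) (-g) : Fin (2 ^ ℓ + 1) → K) j ≠ 0 :=
    Fin.lastCases (by simpa using hg0) fun _ => by simp
  obtain ⟨x, hx, hiso⟩ := hlgp _ hdim _ hcoeff fun i =>
    exists_isotropic_snoc_of_mem_sosN (f i) (hloc i)
  exact mem_sosN_of_isotropic_snoc hchar hx hiso

/-- let `K` be a field of characteristic `≠ 2` satisfying the
local-global principle that every (diagonal) quadratic form in at least 3 variables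
over `K` which is isotropic over all completions `Kw i` (at a set `Ω` of discrete
valuations, with embeddings `f i : K →+* Kw i`) is isotropic over `K`.  If `g ∈ K^×`
is a sum of `2^(ℓ+1)` squares in `K` (`ℓ ≥ 1`) and a sum of `2^ℓ` squares in every
completion `Kw i`, then `g` is a sum of `2^ℓ` squares in `K`. -/
theorem stmt17 {K : Type*} [Field K] (hchar : (2 : K) ≠ 0)
    {ι : Type*} (Kw : ι → Type*) [∀ i, Field (Kw i)] (f : ∀ i, K →+* Kw i)
    (hlgp : ∀ n, 3 ≤ n → ∀ a : Fin n → K, (∀ j, a j ≠ 0) →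
      (∀ i, ∃ x : Fin n → Kw i, (∃ j, x j ≠ 0) ∧ ∑ j, f i (a j) * x j ^ 2 = 0) →
      ∃ x : Fin n → K, (∃ j, x j ≠ 0) ∧ ∑ j, a j * x j ^ 2 = 0)
    (ℓ : ℕ) (hℓ : 1 ≤ ℓ) (g : K) (hg0 : g ≠ 0)
    (hg : g ∈ sosN K (2 ^ (ℓ + 1)))
    (hloc : ∀ i, ∃ y : Fin (2 ^ ℓ) → Kw i, f i g = ∑ j, y j ^ 2) :
    g ∈ sosN K (2 ^ ℓ) :=
  stmt17_general hchar Kw f hlgp ℓ hℓ g hg0 hloc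
end
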